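/- In the min-plus traffic model with dynamics x_i^{k+1} = min(v + x_i^k, x_{i+1}^k − σ) (circularly, with x_{n+1}^k interpreted as x_1^k + m), suppose the initial configuration satisfies 0 ≤ x_1^0 and x_{i+1}^0 − x_i^0 ≥ σ for all i (and x_1^0 + m − x_n^0 ≥ σ). Then for all k, the configuration x^k satisfies the same ordering and safety constraints: x_{i+1}^k − x_i^k ≥ σ for all i, and each sequence k ↦ x_i^k is nondecreasing. -/

import Mathlib

/-!
Let car `i` follow car `s i`, whose position seen from car `i` is shifted by `c i`. The min-plus
step moves a car by at most `v` and keeps it `σ` behind the car ahead; when the gaps are at least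
`σ` and `0 ≤ v` both candidates are at least the old position, so no car moves backwards. The new
position of the car ahead is the minimum of two candidates, each at least `σ` beyond the
corresponding candidate for the follower, so the gaps stay at least `σ`.
-/

section MinPlusStep

variable {ι : Type*} (s : ι → ι) (c : ι → ℝ) (v σ : ℝ)

def GapsAtLeast (y : ι → ℝ) : Prop :=
  ∀ i, σ ≤ y (s i) + c i - y i

def IsMinPlusStep (y y' : ι → ℝ) : Prop :=
  ∀ i, y' i = min (v + y i) (y (s i) + c i - σ)

variable {s c v σ}

theorem le_of_isMinPlusStep {y y' : ι → ℝ} (hv : 0 ≤ v) (hy : GapsAtLeast s c σ y)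
    (hstep : IsMinPlusStep s c v σ y y') (i : ι) : y i ≤ y' i := by
  rw [hstep i]
  exact le_min (by linarith) (by linarith [hy i])

theorem GapsAtLeast.of_isMinPlusStep {y y' : ι → ℝ} (hy : GapsAtLeast s c σ y)
    (hstep : IsMinPlusStep s c v σ y y') : GapsAtLeast s c σ y' := by
  intro i
  have hi := hy i
  have hsi := hy (s i)
  have hleft : y' i ≤ v + y i := (hstep i).trans_le (min_le_left _ _)
  have hright : y' i ≤ y (s i) + c i - σ := (hstep i).trans_le (min_le_right _ _)
  have hfirst : y' i + σ - c i ≤ v + y (s i) := by linarith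
  have hsecond : y' i + σ - c i ≤ y (s (s i)) + c (s i) - σ := by linarith
  rw [hstep (s i)]
  linarith [le_min hfirst hsecond]

end MinPlusStep

section Ring

variable {n : ℕ}

def ringNext (i : Fin n) : Fin n :=
  if h : (i : ℕ) + 1 < n then ⟨i + 1, h⟩ else ⟨0, i.pos⟩

-- The last car follows the first one, which is a lap `m` ahead of it.
def ringLap (m : ℝ) (i : Fin n) : ℝ :=
  if (i : ℕ) + 1 < n then 0 else m

theorem forall_ringNext_iff (hn : 1 ≤ n) (m : ℝ) (P : Fin n → Fin n → ℝ → Prop) :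
    (∀ i, P i (ringNext i) (ringLap m i)) ↔
      (∀ i : Fin n, ∀ h : (i : ℕ) + 1 < n, P i ⟨i + 1, h⟩ 0) ∧
        P ⟨n - 1, Nat.sub_one_lt_of_le hn le_rfl⟩ ⟨0, hn⟩ m := by
  have hlast : ¬ n - 1 + 1 < n := by omega
  constructor
  · intro H
    refine ⟨fun i h => ?_, ?_⟩
    · simpa [ringNext, ringLap, h] using H i
    · simpa [ringNext, ringLap, hlast] using H ⟨n - 1, Nat.sub_one_lt_of_le hn le_rfl⟩
  · rintro ⟨Hsucc, Hlast⟩ i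
    by_cases h : (i : ℕ) + 1 < n
    · simpa [ringNext, ringLap, h] using Hsucc i h
    · have hi : i = ⟨n - 1, Nat.sub_one_lt_of_le hn le_rfl⟩ := Fin.ext (by simp only; omega)
      rw [hi]
      simpa [ringNext, ringLap, hlast] using Hlast

end Ring

theorem stmt_16 {n : ℕ} (hn : 1 ≤ n) (v σ m : ℝ) (hv : 0 < v)
    (x : ℕ → Fin n → ℝ)
    (hrec : ∀ k, (∀ i : Fin n, ∀ h : (i : ℕ) + 1 < n,
        x (k + 1) i = min (v + x k i) (x k ⟨(i : ℕ) + 1, h⟩ - σ)) ∧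
      x (k + 1) ⟨n - 1, by omega⟩ =
        min (v + x k ⟨n - 1, by omega⟩) (x k ⟨0, by omega⟩ + m - σ))
    (hinit : ∀ i : Fin n, ∀ h : (i : ℕ) + 1 < n, x 0 ⟨(i : ℕ) + 1, h⟩ - x 0 i ≥ σ)
    (hinitc : x 0 ⟨0, by omega⟩ + m - x 0 ⟨n - 1, by omega⟩ ≥ σ) :
    ∀ k : ℕ,
      (∀ i : Fin n, ∀ h : (i : ℕ) + 1 < n, x k ⟨(i : ℕ) + 1, h⟩ - x k i ≥ σ) ∧
      (x k ⟨0, by omega⟩ + m - x k ⟨n - 1, by omega⟩ ≥ σ) ∧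
      (∀ i : Fin n, x k i ≤ x (k + 1) i) := by
  have gaps_iff (y : Fin n → ℝ) := forall_ringNext_iff hn m fun i j c => σ ≤ y j + c - y i
  have step (k : ℕ) : IsMinPlusStep ringNext (ringLap m) v σ (x k) (x (k + 1)) :=
    (forall_ringNext_iff hn m fun i j c => x (k + 1) i = min (v + x k i) (x k j + c - σ)).2
      (by simpa only [add_zero] using hrec k)
  have gaps (k : ℕ) : GapsAtLeast ringNext (ringLap m) σ (x k) := by
    induction k with
    | zero => exact (gaps_iff (x 0)).2 (by simpa only [add_zero] using And.intro hinit hinitc)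
    | succ k ih => exact ih.of_isMinPlusStep (step k)
  intro k
  obtain ⟨hsucc, hlast⟩ := (gaps_iff (x k)).1 (gaps k)
  exact ⟨by simpa only [add_zero] using hsucc, hlast, le_of_isMinPlusStep hv.le (gaps k) (step k)⟩
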